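/- Let n ≥ 1 and let a, a′, b, b′ be Hermitian n×n complex matrices with a² = a′² = b² = b′² = 1 (the identity matrix), such that each of a, a′ commutes with each of b, b′. Let W be a positive semidefinite n×n complex matrix with trace 1. Then |Tr(W(aa′ − a′a)(bb′ − b′b))| ≤ 4. -/

import Mathlib

/-!
A Hermitian involution is unitary, and expanding `[a, a'][b, b']` writes it as a signed sum of
four products of such involutions, each of them unitary. For a density matrix `W` and a unitary
`U`, Cauchy–Schwarz for the semi-inner product `⟪x, y⟫ = Tr(y W xᴴ)` gives
`|Tr(W U)| = |⟪1, U⟫| ≤ ‖1‖ ‖U‖ = Tr W = 1`, so each of the four terms contributes at most `1`.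
-/

open Matrix ComplexOrder

theorem IsSelfAdjoint.mem_unitary_of_mul_self_eq_one {R : Type*} [Monoid R] [StarMul R] {u : R}
    (hu : IsSelfAdjoint u) (h : u * u = 1) : u ∈ unitary R := by
  rw [Unitary.mem_iff, hu.star_eq]
  exact ⟨h, h⟩

namespace Matrix

variable {n 𝕜 : Type*} [Fintype n] [DecidableEq n] [RCLike 𝕜]

theorem PosSemidef.norm_trace_mul_le_of_mem_unitary {W U : Matrix n n 𝕜} (hW : W.PosSemidef)
    (hU : U ∈ unitary (Matrix n n 𝕜)) : ‖(W * U).trace‖ ≤ RCLike.re W.trace := by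
  let := W.toMatrixSeminormedAddCommGroup hW
  let := W.toMatrixInnerProductSpace hW
  have hinner : inner 𝕜 (1 : Matrix n n 𝕜) U = (W * U).trace := by
    change (U * W * (1 : Matrix n n 𝕜)ᴴ).trace = _
    rw [conjTranspose_one, Matrix.mul_one, trace_mul_comm]
  have hU : ‖U‖ ^ 2 = RCLike.re W.trace := by
    rw [norm_sq_eq_re_inner (𝕜 := 𝕜)]
    change RCLike.re (U * W * Uᴴ).trace = _
    rw [trace_mul_cycle, ← star_eq_conjTranspose, Unitary.star_mul_self_of_mem hU, Matrix.one_mul]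
  have h1 : ‖(1 : Matrix n n 𝕜)‖ ^ 2 = RCLike.re W.trace := by
    rw [norm_sq_eq_re_inner (𝕜 := 𝕜)]
    change RCLike.re ((1 : Matrix n n 𝕜) * W * (1 : Matrix n n 𝕜)ᴴ).trace = _
    simp
  calc ‖(W * U).trace‖ = ‖inner 𝕜 (1 : Matrix n n 𝕜) U‖ := by rw [hinner]
    _ ≤ ‖(1 : Matrix n n 𝕜)‖ * ‖U‖ := norm_inner_le_norm _ _
    _ = RCLike.re W.trace := by
      rw [(sq_eq_sq₀ (norm_nonneg _) (norm_nonneg _)).mp (h1.trans hU.symm), ← sq, hU]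

theorem PosSemidef.norm_trace_mul_commutator_mul_commutator_le {W u u' v v' : Matrix n n 𝕜}
    (hW : W.PosSemidef) (hu : u ∈ unitary (Matrix n n 𝕜)) (hu' : u' ∈ unitary (Matrix n n 𝕜))
    (hv : v ∈ unitary (Matrix n n 𝕜)) (hv' : v' ∈ unitary (Matrix n n 𝕜)) :
    ‖(W * ((u * u' - u' * u) * (v * v' - v' * v))).trace‖ ≤ 4 * RCLike.re W.trace := by
  have bound {x y z w : Matrix n n 𝕜} (hx : x ∈ unitary _) (hy : y ∈ unitary _)
      (hz : z ∈ unitary _) (hw : w ∈ unitary _) :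
      ‖(W * (x * y * (z * w))).trace‖ ≤ RCLike.re W.trace :=
    hW.norm_trace_mul_le_of_mem_unitary (mul_mem (mul_mem hx hy) (mul_mem hz hw))
  have expand : W * ((u * u' - u' * u) * (v * v' - v' * v)) =
      W * (u * u' * (v * v')) - W * (u * u' * (v' * v))
        - W * (u' * u * (v * v')) + W * (u' * u * (v' * v)) := by
    noncomm_ring
  rw [expand, trace_add, trace_sub, trace_sub]
  calc
    _ ≤ ‖(W * (u * u' * (v * v'))).trace‖ + ‖(W * (u * u' * (v' * v))).trace‖
        + ‖(W * (u' * u * (v * v'))).trace‖ + ‖(W * (u' * u * (v' * v))).trace‖ := by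
      grw [norm_add_le, norm_sub_le, norm_sub_le]
    _ ≤ 4 * RCLike.re W.trace := by
      linarith [bound hu hu' hv hv', bound hu hu' hv' hv, bound hu' hu hv hv', bound hu' hu hv' hv]

end Matrix

theorem commutator_trace_bound
    (n : ℕ)
    (a a' b b' W : Matrix (Fin n) (Fin n) ℂ)
    (ha : a.IsHermitian) (ha' : a'.IsHermitian)
    (hb : b.IsHermitian) (hb' : b'.IsHermitian)
    (ha2 : a * a = 1) (ha'2 : a' * a' = 1)
    (hb2 : b * b = 1) (hb'2 : b' * b' = 1)
    (hW : W.PosSemidef) (hWtr : W.trace = 1) :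
    ‖(W * ((a * a' - a' * a) * (b * b' - b' * b))).trace‖ ≤ 4 := by
  simpa [hWtr] using hW.norm_trace_mul_commutator_mul_commutator_le
    (ha.isSelfAdjoint.mem_unitary_of_mul_self_eq_one ha2)
    (ha'.isSelfAdjoint.mem_unitary_of_mul_self_eq_one ha'2)
    (hb.isSelfAdjoint.mem_unitary_of_mul_self_eq_one hb2)
    (hb'.isSelfAdjoint.mem_unitary_of_mul_self_eq_one hb'2)
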